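/- arXiv:2509.13823 — 2 statements merged into one kernel-verified Lean document; each statement's English description precedes it below -/
import Mathlib

section
/- Let 0 < a < b. Then lim_{s→1⁻} (1-s) ∫_{-∞}^{a} ∫_{a}^{b} |x-y|^{-(1+s)} dx dy = 1. -/
open Set Filter MeasureTheory

/-- `(t+c)^p - t^p → 0` as `t → ∞` for `0 < p < 1`. -/
lemma tendsto_diff_rpow (c p : ℝ) (hc : 0 < c) (hp : 0 < p) (hp1 : p < 1) :
    Tendsto (fun t : ℝ => (t + c) ^ p - t ^ p) atTop (nhds 0) := by
  have hub : Tendsto (fun t : ℝ => c * (p * t ^ (p - 1))) atTop (nhds 0) := by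
    have h0 : Tendsto (fun t : ℝ => t ^ (-(1 - p))) atTop (nhds 0) :=
      tendsto_rpow_neg_atTop (by linarith)
    have h1 : Tendsto (fun t : ℝ => c * (p * t ^ (p - 1))) atTop (nhds (c * (p * 0))) := by
      refine Tendsto.const_mul _ (Tendsto.const_mul _ ?_)
      convert h0 using 2 with t
      norm_num
    simpa using h1
  refine squeeze_zero' ?_ ?_ hub
  · filter_upwards [eventually_ge_atTop (0 : ℝ)] with t ht
    have : t ^ p ≤ (t + c) ^ p := Real.rpow_le_rpow ht (by linarith) hp.le
    linarith
  · filter_upwards [eventually_gt_atTop (0 : ℝ)] with t ht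
    have hlt : t < t + c := by linarith
    obtain ⟨ξ, hξ, hslope⟩ := exists_hasDerivAt_eq_slope (fun x => x ^ p)
      (fun x => p * x ^ (p - 1)) hlt
      (by
        apply ContinuousOn.rpow_const continuousOn_id
        intro x hx
        exact Or.inl (ne_of_gt (lt_of_lt_of_le ht hx.1))
      )
      (by
        intro x hx
        exact Real.hasDerivAt_rpow_const (Or.inl (ne_of_gt (ht.trans hx.1))))
    have hξt : t < ξ := hξ.1
    have hξbound : ξ ^ (p - 1) ≤ t ^ (p - 1) :=
      Real.rpow_le_rpow_of_nonpos ht hξt.le (by linarith)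
    have heq : (t + c) ^ p - t ^ p = c * (p * ξ ^ (p - 1)) := by
      have hc' : (t + c) - t = c := by ring
      rw [hc'] at hslope
      field_simp at hslope
      linarith [hslope]
    rw [heq]
    have : p * ξ ^ (p - 1) ≤ p * t ^ (p - 1) := by
      exact mul_le_mul_of_nonneg_left hξbound hp.le
    nlinarith

/-- single-endpoint contribution to the 1D fractional perimeter. -/
theorem stmt3 (a b : ℝ) (hab : a < b) :
    Filter.Tendsto
      (fun s : ℝ => (1 - s) * ∫ y in Set.Iio a, ∫ x in Set.Ioo a b, |x - y| ^ (-(1 + s)))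
      (nhdsWithin 1 (Set.Iio 1)) (nhds 1) := by
  have hc : (0 : ℝ) < b - a := by linarith
  -- the limit of the explicit formula
  have hlim : Tendsto (fun s : ℝ => (b - a) ^ (1 - s) / s) (nhdsWithin 1 (Set.Iio 1)) (nhds 1) := by
    have h1 : ContinuousAt (fun s : ℝ => (b - a) ^ (1 - s) / s) 1 := by
      apply ContinuousAt.div
      · exact (Real.continuousAt_const_rpow (ne_of_gt hc)).comp
          ((continuous_const.sub continuous_id).continuousAt)
      · exact continuousAt_id
      · norm_num
    have := h1.tendsto.mono_left
      (nhdsWithin_le_nhds : nhdsWithin (1:ℝ) (Set.Iio 1) ≤ nhds 1)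
    simpa using this
  -- eventual equality with the explicit formula
  have hkey : ∀ s : ℝ, s ∈ Set.Ioo (0 : ℝ) 1 →
      (1 - s) * ∫ y in Set.Iio a, ∫ x in Set.Ioo a b, |x - y| ^ (-(1 + s))
        = (b - a) ^ (1 - s) / s := by
    intro s hs
    obtain ⟨hs0, hs1⟩ := hs
    set p : ℝ := 1 - s with hp_def
    have hp0 : 0 < p := by simp [hp_def]; linarith
    have hp1 : p < 1 := by simp [hp_def]; linarith
    have hsp : s * p ≠ 0 := by positivity
    -- inner integral
    have hinner : ∀ y ∈ Set.Iio a,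
        (∫ x in Set.Ioo a b, |x - y| ^ (-(1 + s)))
          = ((a - y) ^ (-s) - (b - y) ^ (-s)) / s := by
      intro y hy
      have hy' : y < a := hy
      have h1 : (∫ x in Set.Ioo a b, |x - y| ^ (-(1 + s)))
          = ∫ x in Set.Ioo a b, (x - y) ^ (-(1 + s)) := by
        apply setIntegral_congr_fun measurableSet_Ioo
        intro x hx
        show |x - y| ^ (-(1 + s)) = (x - y) ^ (-(1 + s))
        rw [abs_of_pos (by rcases hx with ⟨h1, _⟩; linarith)]
      rw [h1, ← integral_Ioc_eq_integral_Ioo, ← intervalIntegral.integral_of_le hab.le]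
      have h2 : (∫ x in a..b, (x - y) ^ (-(1 + s)))
          = ∫ u in a - y..b - y, u ^ (-(1 + s)) :=
        intervalIntegral.integral_comp_sub_right (fun u => u ^ (-(1 + s))) y
      rw [h2]
      rw [integral_rpow (Or.inr ⟨by intro h; apply hs0.ne'; linarith [neg_injective h], by
        rw [Set.uIcc_of_le (by linarith : a - y ≤ b - y)]
        intro h0
        rcases h0 with ⟨h0a, _⟩
        linarith⟩)]
      have he : -(1 + s) + 1 = -s := by ring
      rw [he, div_neg, ← neg_div, neg_sub]
    have h3 : (∫ y in Set.Iio a, ∫ x in Set.Ioo a b, |x - y| ^ (-(1 + s)))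
        = ∫ y in Set.Iio a, ((a - y) ^ (-s) - (b - y) ^ (-s)) / s :=
      setIntegral_congr_fun measurableSet_Iio hinner
    -- move to Iic, then reflect to Ioi (-a)
    have h4 : (∫ y in Set.Iio a, ((a - y) ^ (-s) - (b - y) ^ (-s)) / s)
        = ∫ x in Set.Ioi (-a), ((a + x) ^ (-s) - (b + x) ^ (-s)) / s := by
      rw [← integral_Iic_eq_integral_Iio]
      have := integral_comp_neg_Ioi (-a)
        (fun y : ℝ => ((a - y) ^ (-s) - (b - y) ^ (-s)) / s)
      rw [neg_neg] at this
      rw [← this]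
      congr 1
      ext x
      rw [sub_neg_eq_add, sub_neg_eq_add]
    -- compute the improper integral via an antiderivative
    set G : ℝ → ℝ := fun x => ((a + x) ^ p - (b + x) ^ p) / (s * p) with hG_def
    have hderiv : ∀ x ∈ Set.Ioi (-a),
        HasDerivAt G (((a + x) ^ (-s) - (b + x) ^ (-s)) / s) x := by
      intro x hx
      have hx' : -a < x := hx
      have hax : 0 < a + x := by linarith
      have hbx : 0 < b + x := by linarith
      have d1 : HasDerivAt (fun x : ℝ => (a + x) ^ p) (1 * p * (a + x) ^ (p - 1)) x :=
        HasDerivAt.rpow_const ((hasDerivAt_id x).const_add a) (Or.inl (ne_of_gt hax))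
      have d2 : HasDerivAt (fun x : ℝ => (b + x) ^ p) (1 * p * (b + x) ^ (p - 1)) x :=
        HasDerivAt.rpow_const ((hasDerivAt_id x).const_add b) (Or.inl (ne_of_gt hbx))
      have d3 := (d1.sub d2).div_const (s * p)
      convert d3 using 1
      case e'_4 => rfl
      case e'_5 => rfl
      case e'_8 => rfl
      have hpe : p - 1 = -s := by simp [hp_def]
      rw [hpe]
      field_simp
    have hnonneg : ∀ x ∈ Set.Ioi (-a), 0 ≤ ((a + x) ^ (-s) - (b + x) ^ (-s)) / s := by
      intro x hx
      have hx' : -a < x := hx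
      have hax : 0 < a + x := by linarith
      have : (b + x) ^ (-s) ≤ (a + x) ^ (-s) :=
        Real.rpow_le_rpow_of_nonpos hax (by linarith) (by linarith)
      have h0 : 0 ≤ (a + x) ^ (-s) - (b + x) ^ (-s) := by linarith
      positivity
    have hcont : ContinuousWithinAt G (Set.Ici (-a)) (-a) := by
      apply ContinuousAt.continuousWithinAt
      apply ContinuousAt.div_const
      apply ContinuousAt.sub
      · exact (((continuous_const.add continuous_id).continuousAt).rpow_const (Or.inr hp0.le))
      · exact (((continuous_const.add continuous_id).continuousAt).rpow_const (Or.inr hp0.le))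
    have htend : Tendsto G atTop (nhds 0) := by
      have hcomp : Tendsto (fun x : ℝ => (a + x + (b - a)) ^ p - (a + x) ^ p) atTop (nhds 0) :=
        (tendsto_diff_rpow (b - a) p hc hp0 hp1).comp
          (tendsto_atTop_add_const_left atTop a tendsto_id)
      have heq : ∀ x : ℝ, G x = -((a + x + (b - a)) ^ p - (a + x) ^ p) / (s * p) := by
        intro x
        have : a + x + (b - a) = b + x := by ring
        rw [hG_def]
        simp only [this]
        ring
      have := (hcomp.neg).div_const (s * p)
      rw [neg_zero, zero_div] at this
      exact this.congr (fun x => (heq x).symm)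
    have hint : (∫ x in Set.Ioi (-a), ((a + x) ^ (-s) - (b + x) ^ (-s)) / s)
        = 0 - G (-a) :=
      integral_Ioi_of_hasDerivAt_of_nonneg hcont hderiv hnonneg htend
    have hGa : G (-a) = -((b - a) ^ p / (s * p)) := by
      rw [hG_def]
      simp only [add_neg_cancel]
      rw [Real.zero_rpow (ne_of_gt hp0)]
      have : b + -a = b - a := by ring
      rw [this]
      ring
    rw [h3, h4, hint, hGa]
    rw [hp_def]
    field_simp
    ring
  refine hlim.congr' ?_
  filter_upwards [Ioo_mem_nhdsLT (show (0:ℝ) < 1 by norm_num)] with s hs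
  exact (hkey s hs).symm
end

section
/- Let g : ℝ → ℝ₊ be a Borel measurable function. Then for every s > 0 and r > 0, ∫₀^r ξ^{-(n+s+1)} (∫₀^ξ g(t) dt) dξ ≤ (1/(n+s)) ∫₀^r g(t) t^{-(n+s)} dt. -/
open Set MeasureTheory

/-- Hardy-type inequality. -/
theorem stmt7 (n : ℕ) (hn : 1 ≤ n) (g : ℝ → ENNReal) (hg : Measurable g)
    (s r : ℝ) (hs : 0 < s) (hr : 0 < r) :
    ∫⁻ ξ in Set.Ioo (0 : ℝ) r,
        ENNReal.ofReal (ξ ^ (-((n : ℝ) + s + 1))) * ∫⁻ t in Set.Ioo (0 : ℝ) ξ, g t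
      ≤ ENNReal.ofReal (1 / ((n : ℝ) + s)) *
          ∫⁻ t in Set.Ioo (0 : ℝ) r, g t * ENNReal.ofReal (t ^ (-((n : ℝ) + s))) := by
  set a : ℝ := (n : ℝ) + s with ha_def
  have ha : 0 < a := by positivity
  set e : ℝ := -(a + 1) with he_def
  have he : e < -1 := by rw [he_def]; linarith
  -- the double-integrand
  set F : ℝ → ℝ → ENNReal := fun ξ t =>
    ({p : ℝ × ℝ | 0 < p.2 ∧ p.2 < p.1}.indicator
      (fun p => ENNReal.ofReal (p.1 ^ e) * g p.2)) (ξ, t) with hF_def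
  have hSmeas : MeasurableSet {p : ℝ × ℝ | 0 < p.2 ∧ p.2 < p.1} := by
    apply MeasurableSet.inter
    · exact measurableSet_lt measurable_const measurable_snd
    · exact measurableSet_lt measurable_snd measurable_fst
  have hFmeas : Measurable (Function.uncurry F) := by
    have : Function.uncurry F =
        ({p : ℝ × ℝ | 0 < p.2 ∧ p.2 < p.1}.indicator
          (fun p => ENNReal.ofReal (p.1 ^ e) * g p.2)) := by
      funext p; simp [Function.uncurry, hF_def]
    rw [this]
    exact Measurable.indicator
      ((by fun_prop : Measurable fun p : ℝ × ℝ => ENNReal.ofReal (p.1 ^ e)).mul (hg.comp measurable_snd))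
      hSmeas
  -- step 1 : LHS = double integral of F
  have step1 : ∫⁻ ξ in Set.Ioo (0 : ℝ) r,
      ENNReal.ofReal (ξ ^ e) * ∫⁻ t in Set.Ioo (0 : ℝ) ξ, g t
      = ∫⁻ ξ in Set.Ioo (0 : ℝ) r, ∫⁻ t in Set.Ioo (0 : ℝ) r, F ξ t := by
    refine setLIntegral_congr_fun measurableSet_Ioo ?_
    intro ξ hξ
    have hind : ∀ t, F ξ t = (Set.Ioo (0 : ℝ) ξ).indicator
        (fun t => ENNReal.ofReal (ξ ^ e) * g t) t := by
      intro t
      by_cases h : t ∈ Set.Ioo (0 : ℝ) ξ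
      · simp only [hF_def]
        rw [Set.indicator_of_mem, Set.indicator_of_mem h]
        exact ⟨h.1, h.2⟩
      · simp only [hF_def]
        rw [Set.indicator_of_notMem, Set.indicator_of_notMem h]
        intro hc; exact h ⟨hc.1, hc.2⟩
    simp only [hind]
    rw [lintegral_indicator measurableSet_Ioo, Measure.restrict_restrict measurableSet_Ioo,
      Set.Ioo_inter_Ioo]
    have hmax : max (0:ℝ) 0 = 0 := by simp
    rw [hmax, min_eq_left hξ.2.le, lintegral_const_mul _ hg]
  rw [step1]
  -- step 2 : swap
  rw [lintegral_lintegral_swap hFmeas.aemeasurable]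
  -- step 3 : bound inner integral
  have key : ∀ t ∈ Set.Ioo (0 : ℝ) r,
      (∫⁻ ξ in Set.Ioo (0 : ℝ) r, F ξ t)
        ≤ g t * ENNReal.ofReal (t ^ (-a)) * ENNReal.ofReal (1 / a) := by
    intro t ht
    have hm2 : Measurable fun x : ℝ => ENNReal.ofReal (x ^ e) := by fun_prop
    have hind : ∀ ξ, F ξ t = (Set.Ioi t).indicator
        (fun ξ => ENNReal.ofReal (ξ ^ e) * g t) ξ := by
      intro ξ
      by_cases h : ξ ∈ Set.Ioi t
      · simp only [hF_def]
        rw [Set.indicator_of_mem h, Set.indicator_of_mem]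
        exact ⟨ht.1, h⟩
      · simp only [hF_def]
        rw [Set.indicator_of_notMem h, Set.indicator_of_notMem]
        intro hc; exact h hc.2
    simp only [hind]
    rw [lintegral_indicator measurableSet_Ioi, Measure.restrict_restrict measurableSet_Ioi,
      lintegral_mul_const _ hm2]
    have hmono : (∫⁻ ξ in Set.Ioi t ∩ Set.Ioo 0 r, ENNReal.ofReal (ξ ^ e))
        ≤ ∫⁻ ξ in Set.Ioi t, ENNReal.ofReal (ξ ^ e) :=
      lintegral_mono_set Set.inter_subset_left
    have heval : (∫⁻ ξ in Set.Ioi t, ENNReal.ofReal (ξ ^ e))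
        = ENNReal.ofReal (t ^ (-a) * (1 / a)) := by
      rw [← ofReal_integral_eq_lintegral_ofReal (integrableOn_Ioi_rpow_of_lt he ht.1)
        ((ae_restrict_iff' measurableSet_Ioi).2 (Filter.Eventually.of_forall fun ξ hξ => Real.rpow_nonneg (ht.1.trans hξ).le e))]
      rw [integral_Ioi_rpow_of_lt he ht.1]
      congr 1
      have h1 : e + 1 = -a := by rw [he_def]; ring
      rw [h1]
      field_simp
    calc (∫⁻ ξ in Set.Ioi t ∩ Set.Ioo 0 r, ENNReal.ofReal (ξ ^ e)) * g t
        ≤ ENNReal.ofReal (t ^ (-a) * (1 / a)) * g t :=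
          mul_le_mul_left (heval ▸ hmono) _
      _ = g t * ENNReal.ofReal (t ^ (-a)) * ENNReal.ofReal (1 / a) := by
          rw [ENNReal.ofReal_mul (Real.rpow_nonneg ht.1.le _)]; ring
  calc ∫⁻ t in Set.Ioo (0 : ℝ) r, ∫⁻ ξ in Set.Ioo (0 : ℝ) r, F ξ t
      ≤ ∫⁻ t in Set.Ioo (0 : ℝ) r,
          g t * ENNReal.ofReal (t ^ (-a)) * ENNReal.ofReal (1 / a) :=
        setLIntegral_mono_ae (by fun_prop) (Filter.Eventually.of_forall key)
    _ = ENNReal.ofReal (1 / a) *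
          ∫⁻ t in Set.Ioo (0 : ℝ) r, g t * ENNReal.ofReal (t ^ (-a)) := by
        rw [lintegral_mul_const]
        · ring
        · exact hg.mul (by fun_prop)
end
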